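/- arXiv:2407.02375 — 4 statements merged into one kernel-verified Lean document; each statement's English description precedes it below -/
import Mathlib

section
/- The slide polynomials {𝔉_b : b a weakly increasing (possibly empty) sequence of positive integers} form a ℤ-basis of Poly = ℤ[x₁,x₂,…]; moreover, for each d ≥ 0, the subfamily {𝔉_b : b weakly increasing with all entries ≤ d} is a ℤ-basis of the subring ℤ[x₁,…,x_d]. -/
/-
Conventions: `Pol = MvPolynomial ℕ ℤ` with the Lean variable `X i` representing
the paper's variable `x_{i+1}` (0-indexed).  All operators carrying a paper index
`i ≥ 1` are represented by Lean operators indexed by `i : ℕ` (Lean `i` ↔ paper `i+1`),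
and sequences of positive integers are represented by sequences of natural numbers
(entry `v` ↔ paper entry `v+1`).
-/

open MvPolynomial
open scoped Classical

abbrev Pol := MvPolynomial ℕ ℤ

noncomputable section

/-- Interchange the variables `x_{i+1}` and `x_{i+2}` (paper indexing). -/
def swapVar (i : ℕ) (f : Pol) : Pol := rename (Equiv.swap i (i+1)) f

/-- Exact division: the unique `g` with `d * g = f` when it exists (`0` otherwise). -/
def exactDiv (d f : Pol) : Pol := if h : ∃ g : Pol, d * g = f then h.choose else 0

/-- The divided difference operator `∂_{i+1}` (paper indexing). -/
def ddiff (i : ℕ) (f : Pol) : Pol := exactDiv (X i - X (i+1)) (f - swapVar i f)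

/-- The Bergeron–Sottile operator `R_{i+1}` (paper indexing): `x_j ↦ x_j` for
`j < i+1`, `x_{i+1} ↦ 0`, `x_j ↦ x_{j-1}` for `j > i+1`. -/
def BS (i : ℕ) : Pol →ₐ[ℤ] Pol :=
  aeval fun j => if j < i then X j else if j = i then 0 else X (j-1)

/-- `m`-fold iterate of `BS i`. -/
def BSit (i m : ℕ) (f : Pol) : Pol := (fun g => BS i g)^[m] f

/-- `Z g = Σ_{k ≥ 0} R₁ᵏ g`. -/
def Zop (f : Pol) : Pol := ∑ᶠ k : ℕ, BSit 0 k f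

/-- `Z^{(m)} g = Σ_{k ≥ 0} R₁^{km} g`. -/
def Zm (m : ℕ) (f : Pol) : Pol := ∑ᶠ k : ℕ, BSit 0 (k * m) f

/-- The truncation operator keeping the first `n` variables: `Π_n` in paper indexing. -/
def truncOp (n : ℕ) : Pol →ₐ[ℤ] Pol := aeval fun j => if j < n then X j else 0

/-- The quasisymmetric divided difference `T_{i+1}` defined as the exact quotient
`((R_{i+2} - R_{i+1})f)/x_{i+1}` (paper indexing). -/
def TqDiv (i : ℕ) (f : Pol) : Pol := exactDiv (X i) (BS (i+1) f - BS i f)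

/-- The quasisymmetric divided difference `T_{i+1} = R_{i+1} ∘ ∂_{i+1}` (paper indexing). -/
def Tq (i : ℕ) (f : Pol) : Pol := BS i (ddiff i f)

/-- The `m`-quasisymmetric divided difference `T^{(m)}_{i+1}` (paper indexing). -/
def Tm (m i : ℕ) (f : Pol) : Pol := exactDiv (X i) (BSit (i+1) m f - BSit i m f)

/-- The slide extractor `D_{i+1} = Π_{i+1} ∘ ∂_{i+1}` (paper indexing). -/
def Dop (i : ℕ) (f : Pol) : Pol := truncOp (i+1) (ddiff i f)

/-- The `m`-slide extractor `D^{(m)}_{i+1} = Π_{i+1} ∘ T^{(m)}_{i+1}` (paper indexing). -/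
def Dm (m i : ℕ) (f : Pol) : Pol := truncOp (i+1) (Tm m i f)

/-- The slide creator `B_{i+1} f = Σ_{k=1}^{i+1} x_k · R_k^{i+1-k}(Π_{i+1} f)` (paper indexing). -/
def Bop (i : ℕ) (f : Pol) : Pol :=
  ∑ k ∈ Finset.range (i+1), X k * BSit k (i - k) (truncOp (i+1) f)

/-- The creation operator `Z ∘ x_{i+1} ∘ R_{i+1}` (paper indexing). -/
def crea (i : ℕ) (f : Pol) : Pol := Zop (X i * BS i f)

/-- A permutation of `{0,1,2,…}` is finitely supported if it fixes all but
finitely many points. -/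
def FinSupp (w : Equiv.Perm ℕ) : Prop := Set.Finite {x | w x ≠ x}

/-- Coxeter length: the minimal `k` such that `w` is a product of `k` simple
transpositions. -/
def len (w : Equiv.Perm ℕ) : ℕ :=
  sInf {k | ∃ l : List ℕ, l.length = k ∧ (l.map fun i => Equiv.swap i (i+1)).prod = w}

/-- The set of reduced words for `w`. -/
def Red (w : Equiv.Perm ℕ) : Set (List ℕ) :=
  {l | l.length = len w ∧ (l.map fun i => Equiv.swap i (i+1)).prod = w}

/-- A family of polynomials indexed by permutations is a family of Schubert
polynomials if: each member is homogeneous of degree the length, the identity is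
sent to `1`, and divided differences act as expected (all this for finitely
supported permutations). -/
def IsSchubertFamily (S : Equiv.Perm ℕ → Pol) : Prop :=
  (∀ w, FinSupp w → (S w).IsHomogeneous (len w)) ∧
  S 1 = 1 ∧
  ∀ w, FinSupp w → ∀ i : ℕ,
    ddiff i (S w) = if w (i+1) < w i then S (w * Equiv.swap i (i+1)) else 0

/-- `b` is a compatible sequence for `a`. -/
def Compat {k : ℕ} (a b : Fin k → ℕ) : Prop :=
  Monotone b ∧ (∀ j, b j ≤ a j) ∧
  ∀ (j : ℕ) (h : j + 1 < k),
    a ⟨j, Nat.lt_of_succ_lt h⟩ < a ⟨j+1, h⟩ → b ⟨j, Nat.lt_of_succ_lt h⟩ < b ⟨j+1, h⟩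

/-- The slide polynomial `𝔉_a`, as the sum of the monomials of all compatible
sequences for `a`. -/
def slide {k : ℕ} (a : Fin k → ℕ) : Pol :=
  ∑ᶠ b ∈ {b : Fin k → ℕ | Compat a b}, ∏ j, X (b j)

/-- `b` is an `m`-compatible sequence for `a` (entrywise congruent mod `m`). -/
def MCompat (m : ℕ) {k : ℕ} (a b : Fin k → ℕ) : Prop :=
  Monotone b ∧ (∀ j, b j ≤ a j ∧ b j % m = a j % m) ∧
  ∀ (j : ℕ) (h : j + 1 < k),
    a ⟨j, Nat.lt_of_succ_lt h⟩ < a ⟨j+1, h⟩ → b ⟨j, Nat.lt_of_succ_lt h⟩ < b ⟨j+1, h⟩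

/-- The `m`-slide polynomial `𝔉ᵐ_a`. -/
def mslide (m : ℕ) {k : ℕ} (a : Fin k → ℕ) : Pol :=
  ∑ᶠ b ∈ {b : Fin k → ℕ | MCompat m a b}, ∏ j, X (b j)

/-- Value of the `m`-slide creator `B^{(m)}_{a+1}` (paper indexing) on the monomial with
exponent vector `d`. -/
def BmMono (m a : ℕ) (d : ℕ →₀ ℕ) : Pol :=
  if ∃ t, a < t ∧ d t ≠ 0 then 0
  else monomial (d.erase a) 1 *
    ∑ r ∈ Finset.range (a+1),
      if r * m ≤ a ∧ ∀ t, t < a → d t ≠ 0 → t < a - r * m then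
        X (a - r * m) ^ (d a + 1) else 0

/-- The `m`-slide creator `B^{(m)}_{a+1}` (paper indexing), extended linearly from
its values on monomials. -/
def Bm (m a : ℕ) (f : Pol) : Pol := ∑ d ∈ f.support, C (f.coeff d) * BmMono m a d

end

/-
Weigh an exponent vector `m` by `Σ t • m t`, the sum of the entries of any sequence with
exponent vector `m`. A compatible sequence `b` for `a` satisfies `b ≤ a` entrywise, and a weakly
increasing sequence is determined by its exponent vector, so for weakly increasing `a` the slide
polynomial is `x^a` plus monomials of strictly smaller weight. Weakly increasing sequences
correspond bijectively to monomials, so the slide polynomials are unitriangular with respect to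
the monomial basis, and both linear independence and spanning follow by induction on the weight.
Entries of compatible sequences never exceed those of `a`, which gives the statement for
`ℤ[x₁,…,x_d]`.
-/

namespace MvPolynomial

section Triangular

variable {σ R ι β : Type*} [CommRing R] [LinearOrder β]
  {v : ι → MvPolynomial σ R} {e : ι → σ →₀ ℕ} {w : (σ →₀ ℕ) → β}

theorem linearIndependent_of_unitriangular (he : Function.Injective e)
    (hlead : ∀ i, coeff (e i) (v i) = 1)
    (hlower : ∀ i, ∀ m ∈ (v i).support, m ≠ e i → w m < w (e i)) :
    LinearIndependent R v := by
  rw [linearIndependent_iff']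
  intro t g hsum i hi
  by_contra hgi
  obtain ⟨j, hj, hmax⟩ := (t.filter (g · ≠ 0)).exists_max_image (w ∘ e)
    ⟨i, Finset.mem_filter.mpr ⟨hi, hgi⟩⟩
  obtain ⟨hjt, hgj⟩ := Finset.mem_filter.mp hj
  have hcoeff : coeff (e j) (∑ i ∈ t, g i • v i) = g j := by
    rw [coeff_sum, Finset.sum_eq_single j _ (absurd hjt)]
    · rw [coeff_smul, hlead, smul_eq_mul, mul_one]
    · intro k hk hkj
      by_cases hgk : g k = 0
      · rw [hgk, zero_smul, coeff_zero]
      by_contra hne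
      have hmem : e j ∈ (v k).support :=
        mem_support_iff.mpr fun h => hne (by rw [coeff_smul, h, smul_zero])
      have hlt := hlower k (e j) hmem (he.ne hkj.symm)
      exact (hmax k (Finset.mem_filter.mpr ⟨hk, hgk⟩)).not_gt hlt
  exact hgj (hcoeff.symm.trans (by rw [hsum, coeff_zero]))

theorem monomial_one_eq_sub_sum_erase (p : MvPolynomial σ R) (m : σ →₀ ℕ) (hm : coeff m p = 1) :
    monomial m 1 = p - ∑ n ∈ p.support.erase m, coeff n p • monomial n 1 := by
  ext n
  simp only [coeff_sub, coeff_sum, coeff_smul, coeff_monomial, smul_eq_mul, mul_ite, mul_one,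
    mul_zero, Finset.sum_ite_eq', Finset.mem_erase, mem_support_iff]
  by_cases h : m = n
  · subst h; simp [hm]
  · by_cases hn : coeff n p = 0 <;> simp [h, Ne.symm h, hn]

theorem span_range_eq_restrictSupport_of_unitriangular [WellFoundedLT β] (S : Set (σ →₀ ℕ))
    (hsupp : ∀ i, ↑(v i).support ⊆ S) (hsurj : ∀ m ∈ S, ∃ i, e i = m)
    (hlead : ∀ i, coeff (e i) (v i) = 1)
    (hlower : ∀ i, ∀ m ∈ (v i).support, m ≠ e i → w m < w (e i)) :
    Submodule.span R (Set.range v) = restrictSupport R S := by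
  refine le_antisymm (Submodule.span_le.mpr ?_) ?_
  · rintro _ ⟨i, rfl⟩
    exact (mem_restrictSupport_iff R).mpr (hsupp i)
  rw [restrictSupport_eq_span, Submodule.span_le, Set.image_subset_iff]
  suffices h : ∀ b : β, ∀ m ∈ S, w m = b → monomial m 1 ∈ Submodule.span R (Set.range v) from
    fun m hm => h _ m hm rfl
  intro b
  induction b using WellFoundedLT.induction with
  | _ b ih =>
    rintro m hm rfl
    obtain ⟨i, rfl⟩ := hsurj m hm
    rw [monomial_one_eq_sub_sum_erase (v i) (e i) (hlead i)]
    refine sub_mem (Submodule.subset_span ⟨i, rfl⟩) (Submodule.sum_mem _ fun n hn => ?_)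
    obtain ⟨hne, hn⟩ := Finset.mem_erase.mp hn
    exact Submodule.smul_mem _ _ (ih _ (hlower i n hn hne) n (hsupp i hn) rfl)

end Triangular

theorem toSubmodule_supported_eq_restrictSupport {σ R : Type*} [CommSemiring R] (s : Set σ) :
    Subalgebra.toSubmodule (supported R s) = restrictSupport R {m | ↑m.support ⊆ s} := by
  ext p
  simp only [Subalgebra.mem_toSubmodule, mem_supported, mem_restrictSupport_iff R, Set.subset_def,
    Finset.mem_coe, mem_vars_iff_mem_support, Set.mem_ofPred_eq]
  grind

end MvPolynomial

noncomputable section SlideBasis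

def seqExponent {k : ℕ} (a : Fin k → ℕ) : ℕ →₀ ℕ := Multiset.toFinsupp (List.ofFn a)

theorem toMultiset_seqExponent {k : ℕ} (a : Fin k → ℕ) :
    Finsupp.toMultiset (seqExponent a) = List.ofFn a :=
  Multiset.toFinsupp_toMultiset _

theorem mem_support_seqExponent {k : ℕ} {a : Fin k → ℕ} {t : ℕ} :
    t ∈ (seqExponent a).support ↔ ∃ j, a j = t := by
  simp [seqExponent, Multiset.toFinsupp_support, List.mem_ofFn]

theorem prod_X_eq_monomial_seqExponent {k : ℕ} (a : Fin k → ℕ) :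
    (∏ j, X (a j) : Pol) = monomial (seqExponent a) 1 := by
  induction k with
  | zero => simp [seqExponent]
  | succ k ih =>
    rw [Fin.prod_univ_succ, ih, X, monomial_mul, one_mul, seqExponent, seqExponent,
      List.ofFn_succ, ← Multiset.cons_coe, ← Multiset.singleton_add, Multiset.toFinsupp_add,
      Multiset.toFinsupp_singleton]

theorem ofFn_eq_of_seqExponent_eq {k l : ℕ} {a : Fin k → ℕ} {b : Fin l → ℕ} (ha : Monotone a)
    (hb : Monotone b) (h : seqExponent a = seqExponent b) : List.ofFn a = List.ofFn b := by
  have hperm := congrArg Finsupp.toMultiset h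
  rw [toMultiset_seqExponent, toMultiset_seqExponent] at hperm
  exact List.Perm.eq_of_sortedLE (List.sortedLE_ofFn_iff.mpr ha) (List.sortedLE_ofFn_iff.mpr hb)
    (Quotient.exact hperm)

theorem exists_monotone_seqExponent_eq (m : ℕ →₀ ℕ) :
    ∃ (k : ℕ) (a : Fin k → ℕ), Monotone a ∧ seqExponent a = m := by
  set l := Multiset.sort (Finsupp.toMultiset m) (· ≤ ·)
  refine ⟨l.length, l.get, ?_, ?_⟩
  · rw [← List.sortedLE_ofFn_iff, List.ofFn_get]
    exact List.sortedLE_iff_pairwise.mpr (Multiset.pairwise_sort _ _)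
  · rw [seqExponent, List.ofFn_get, Multiset.sort_eq, Finsupp.toMultiset_toFinsupp]

theorem compat_self {k : ℕ} {a : Fin k → ℕ} (ha : Monotone a) : Compat a a :=
  ⟨ha, fun _ => le_rfl, fun _ _ h => h⟩

theorem finite_setOf_compat {k : ℕ} (a : Fin k → ℕ) : {b | Compat a b}.Finite :=
  (Set.Finite.pi fun j => Set.finite_Iic (a j)).subset fun _ hb j _ => hb.2.1 j

theorem slide_eq_sum {k : ℕ} (a : Fin k → ℕ) :
    slide a = ∑ b ∈ (finite_setOf_compat a).toFinset, monomial (seqExponent b) 1 := by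
  rw [slide, finsum_mem_eq_finite_toFinset_sum _ (finite_setOf_compat a)]
  exact Finset.sum_congr rfl fun b _ => prod_X_eq_monomial_seqExponent b

open Finset in
theorem coeff_slide {k : ℕ} (a : Fin k → ℕ) (m : ℕ →₀ ℕ) :
    coeff m (slide a) = #{b ∈ (finite_setOf_compat a).toFinset | seqExponent b = m} := by
  simp [slide_eq_sum, coeff_sum, coeff_monomial, Finset.sum_boole]

theorem exists_compat_of_mem_support_slide {k : ℕ} {a : Fin k → ℕ} {m : ℕ →₀ ℕ}
    (hm : m ∈ (slide a).support) : ∃ b, Compat a b ∧ seqExponent b = m := by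
  rw [mem_support_iff, coeff_slide, Nat.cast_ne_zero, Finset.card_ne_zero] at hm
  obtain ⟨b, hb⟩ := hm
  exact ⟨b, by simpa using hb⟩

theorem coeff_seqExponent_slide {k : ℕ} {a : Fin k → ℕ} (ha : Monotone a) :
    coeff (seqExponent a) (slide a) = 1 := by
  rw [coeff_slide, Nat.cast_eq_one, Finset.card_eq_one]
  refine ⟨a, Finset.eq_singleton_iff_unique_mem.mpr ⟨by simpa using compat_self ha, ?_⟩⟩
  intro b hb
  simp only [Finset.mem_filter, Set.Finite.mem_toFinset, Set.mem_ofPred_eq] at hb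
  exact List.ofFn_injective (ofFn_eq_of_seqExponent_eq hb.1.1 ha hb.2)

theorem sum_lt_of_mem_support_slide {k : ℕ} {a : Fin k → ℕ} (ha : Monotone a) {m : ℕ →₀ ℕ}
    (hm : m ∈ (slide a).support) (hne : m ≠ seqExponent a) :
    (Finsupp.toMultiset m).sum < (Finsupp.toMultiset (seqExponent a)).sum := by
  obtain ⟨b, hb, rfl⟩ := exists_compat_of_mem_support_slide hm
  have hba : b ≠ a := by rintro rfl; exact hne rfl
  obtain ⟨j, hj⟩ := Function.ne_iff.mp hba
  simp only [toMultiset_seqExponent, Multiset.sum_coe, List.sum_ofFn]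
  exact Finset.sum_lt_sum (fun i _ => hb.2.1 i) ⟨j, Finset.mem_univ j, (hb.2.1 j).lt_of_ne hj⟩

section Families

variable {P : ∀ {k : ℕ}, (Fin k → ℕ) → Prop}

theorem seqExponent_injective (hP : ∀ {k} (a : Fin k → ℕ), P a → Monotone a) :
    Function.Injective fun p : Σ k, {a : Fin k → ℕ // P a} => seqExponent p.2.1 := by
  rintro ⟨k, a, ha⟩ ⟨l, b, hb⟩ h
  have hab := List.ofFn_inj'.mp (ofFn_eq_of_seqExponent_eq (hP a ha) (hP b hb) h)
  cases hab
  rfl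

theorem linearIndependent_slide (hP : ∀ {k} (a : Fin k → ℕ), P a → Monotone a) :
    LinearIndependent ℤ fun p : Σ k, {a : Fin k → ℕ // P a} => slide p.2.1 :=
  linearIndependent_of_unitriangular (seqExponent_injective hP)
    (fun p => coeff_seqExponent_slide (hP _ p.2.2))
    (fun p _ hm hne => sum_lt_of_mem_support_slide (hP _ p.2.2) hm hne)

theorem span_range_slide_eq_restrictSupport {s : Set ℕ} (hs : IsLowerSet s)
    (hP : ∀ {k} (a : Fin k → ℕ), P a ↔ Monotone a ∧ ∀ j, a j ∈ s) :
    Submodule.span ℤ (Set.range fun p : Σ k, {a : Fin k → ℕ // P a} => slide p.2.1) =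
      restrictSupport ℤ {m | ↑m.support ⊆ s} := by
  refine span_range_eq_restrictSupport_of_unitriangular _ ?_ ?_
    (fun p => coeff_seqExponent_slide ((hP _).mp p.2.2).1)
    (fun p _ hm hne => sum_lt_of_mem_support_slide ((hP _).mp p.2.2).1 hm hne)
  · rintro ⟨k, a, ha⟩ m hm t ht
    obtain ⟨b, hb, rfl⟩ := exists_compat_of_mem_support_slide hm
    obtain ⟨j, rfl⟩ := mem_support_seqExponent.mp ht
    exact hs (hb.2.1 j) (((hP a).mp ha).2 j)
  · intro m hm
    obtain ⟨k, a, ha, rfl⟩ := exists_monotone_seqExponent_eq m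
    refine ⟨⟨k, a, (hP a).mpr ⟨ha, fun j => hm ?_⟩⟩, rfl⟩
    exact mem_support_seqExponent.mpr ⟨j, rfl⟩

end Families

end SlideBasis

/-- slide polynomials (indexed by weakly increasing sequences) are a
ℤ-basis of `Pol`, and those with all entries at most `d` (paper indexing) are a
ℤ-basis of `ℤ[x₁,…,x_d]`. -/
theorem stmt_9 :
    (LinearIndependent ℤ
        (fun p : Σ k : ℕ, {a : Fin k → ℕ // Monotone a} => slide p.2.1) ∧
      Submodule.span ℤ
        (Set.range (fun p : Σ k : ℕ, {a : Fin k → ℕ // Monotone a} => slide p.2.1)) = ⊤) ∧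
    ∀ d : ℕ,
      LinearIndependent ℤ
        (fun p : Σ k : ℕ, {a : Fin k → ℕ // Monotone a ∧ ∀ j, a j < d} => slide p.2.1) ∧
      Submodule.span ℤ
        (Set.range
          (fun p : Σ k : ℕ, {a : Fin k → ℕ // Monotone a ∧ ∀ j, a j < d} => slide p.2.1)) =
      Subalgebra.toSubmodule (supported ℤ (Set.Iio d)) := by
  refine ⟨⟨linearIndependent_slide fun _ => id, ?_⟩,
    fun d => ⟨linearIndependent_slide fun _ => And.left, ?_⟩⟩
  · rw [span_range_slide_eq_restrictSupport isLowerSet_univ (by simp)]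
    simp [restrictSupport_univ]
  · rw [toSubmodule_supported_eq_restrictSupport]
    exact span_range_slide_eq_restrictSupport (P := fun a => Monotone a ∧ ∀ j, a j < d)
      (isLowerSet_Iio d) fun _ => Iff.rfl
end

section
/- For every polynomial f ∈ Poly⁺ (zero constant term), the finitely supported sum Σ_{i≥1} B_i(D_i f) equals f; that is, the slide creators B_i are creation operators for the slide extractors D_i. -/
/-
Conventions: `Pol = MvPolynomial ℕ ℤ` with the Lean variable `X i` representing
the paper's variable `x_{i+1}` (0-indexed).  All operators carrying a paper index
`i ≥ 1` are represented by Lean operators indexed by `i : ℕ` (Lean `i` ↔ paper `i+1`),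
and sequences of positive integers are represented by sequences of natural numbers
(entry `v` ↔ paper entry `v+1`).
-/

open MvPolynomial
open scoped Classical

/-
In paper indexing, applying `Π_i` to `(x_i - x_{i+1}) ∂_i f = f - s_i f` gives
`x_i · D_i f = Π_i f - Π_i s_i f`. Since `R_k^{i-k}` sends `x_i` to `x_k` and `D_i f` only
involves `x_1, …, x_i`, each summand of `B_i (D_i f)` becomes
`x_k R_k^{i-k}(D_i f) = S_{k,i} f - S_{k,i+1} f`, where the substitution `S_{k,a}` (`truncMove`)
fixes `x_1, …, x_{k-1}`, sends `x_a` to `x_k` and kills every other variable.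
The double sum over `k ≤ i ≤ n` telescopes in `i` to `Σ_{k ≤ n} (S_{k,k} f - S_{k,n+1} f)`,
and once `x_{n+1}` does not occur in `f` this is `Σ_{k ≤ n} (Π_k f - Π_{k-1} f) = f - f(0)`.
-/

namespace MvPolynomial

theorem X_sub_X_dvd_sub_rename_swap {R σ : Type*} [CommRing R] [DecidableEq σ] (a b : σ)
    (p : MvPolynomial σ R) :
    (X a - X b : MvPolynomial σ R) ∣ p - rename (Equiv.swap a b) p := by
  induction p using MvPolynomial.induction_on with
  | C r => simp
  | add p q hp hq =>
    rw [map_add, add_sub_add_comm]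
    exact dvd_add hp hq
  | mul_X p n hp =>
    have hX : (X a - X b : MvPolynomial σ R) ∣ X n - X (Equiv.swap a b n) := by
      rw [Equiv.swap_apply_def]
      split_ifs with ha hb
      · rw [ha]
      · rw [hb, ← neg_sub, neg_dvd]
      · simp
    rw [map_mul, rename_X,
      show p * X n - rename (Equiv.swap a b) p * X (Equiv.swap a b n)
        = (p - rename (Equiv.swap a b) p) * X n
          + rename (Equiv.swap a b) p * (X n - X (Equiv.swap a b n)) by ring]
    exact dvd_add (dvd_mul_of_dvd_left hp _) (dvd_mul_of_dvd_right hX _)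

theorem aeval_congr_vars {R S σ : Type*} [CommSemiring R] [CommSemiring S] [Algebra R S]
    {g g' : σ → S} {p : MvPolynomial σ R} (h : ∀ j ∈ p.vars, g j = g' j) :
    aeval g p = aeval g' p :=
  hom_congr_vars (f₁ := (aeval g).toRingHom) (f₂ := (aeval g').toRingHom)
    (RingHom.ext fun r => by simp) (fun j hj _ => by simpa using h j hj) rfl

end MvPolynomial

theorem Finset.sum_range_sum_range_succ_sub {G : Type*} [AddCommGroup G] (T : ℕ → ℕ → G)
    (n : ℕ) :
    ∑ i ∈ range n, ∑ k ∈ range (i + 1), (T k i - T k (i + 1)) =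
      ∑ k ∈ range n, (T k k - T k n) := by
  induction n with
  | zero => simp
  | succ n ih =>
    rw [sum_range_succ, ih, sum_range_succ _ n, sum_range_succ (fun k => T k k - T k (n + 1)),
      ← add_assoc, ← sum_add_distrib]
    simp only [sub_add_sub_cancel]

noncomputable section

theorem mul_ddiff (i : ℕ) (f : Pol) : (X i - X (i + 1)) * ddiff i f = f - swapVar i f := by
  have h : ∃ g : Pol, (X i - X (i + 1)) * g = f - swapVar i f := by
    obtain ⟨g, hg⟩ := X_sub_X_dvd_sub_rename_swap i (i + 1) f
    exact ⟨g, hg.symm⟩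
  rw [ddiff, exactDiv, dif_pos h]
  exact h.choose_spec

theorem BSit_eq_pow_apply (k m : ℕ) (f : Pol) : BSit k m f = (BS k ^ m) f := by
  rw [BSit, AlgHom.coe_pow]

theorem BS_pow_X (k m j : ℕ) :
    (BS k ^ m) (X j) = if j < k then X j else if j < k + m then 0 else X (j - m) := by
  induction m with
  | zero => split_ifs <;> first | rfl | omega
  | succ m ih =>
    rw [pow_succ', AlgHom.mul_apply, ih]
    by_cases h1 : j < k
    · simp [h1, BS]
    by_cases h2 : j < k + m
    · simp [h1, h2, show j < k + (m + 1) by omega]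
    simp only [BS, h1, h2, if_false, aeval_X]
    split_ifs <;> first | rfl | omega

def truncMove (k a : ℕ) : Pol →ₐ[ℤ] Pol :=
  aeval fun j => if j < k then X j else if j = a then X k else 0

theorem truncMove_self (k : ℕ) : truncMove k k = truncOp (k + 1) := by
  refine algHom_ext fun j => ?_
  simp only [truncMove, truncOp, aeval_X]
  split_ifs <;> first | rfl | (subst_vars; rfl) | omega

theorem truncMove_of_notMem_vars {k a : ℕ} {f : Pol} (ha : a ∉ f.vars) :
    truncMove k a f = truncOp k f :=
  aeval_congr_vars fun j hj => by
    rw [if_neg (ne_of_mem_of_not_mem hj ha)]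

theorem truncOp_of_vars_subset {n : ℕ} {f : Pol} (h : f.vars ⊆ Finset.range n) :
    truncOp n f = f := by
  conv_rhs => rw [← aeval_X_left_apply f]
  exact aeval_congr_vars fun j hj => if_pos (Finset.mem_range.mp (h hj))

theorem truncOp_zero_apply (f : Pol) : truncOp 0 f = C (constantCoeff f) := by
  simp only [truncOp, Nat.not_lt_zero, if_false]
  exact aeval_zero' f

theorem X_mul_BSit_truncOp_Dop {k i : ℕ} (hk : k ≤ i) (f : Pol) :
    X k * BSit k (i - k) (truncOp (i + 1) (Dop i f)) =
      truncMove k i f - truncMove k (i + 1) f := by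
  set φ : Pol →ₐ[ℤ] Pol := (BS k ^ (i - k)).comp ((truncOp (i + 1)).comp (truncOp (i + 1)))
  have hφ : φ = truncMove k i := algHom_ext fun j => by
    simp only [φ, AlgHom.comp_apply, truncOp, truncMove, aeval_X]
    by_cases hj : j < i + 1
    · simp only [if_pos hj, aeval_X, BS_pow_X]
      split_ifs <;> first | rfl | omega | (congr 1; omega)
    · simp only [if_neg hj, map_zero]
      rw [if_neg (by omega), if_neg (by omega)]
  have hφ_swap : φ.comp (rename (Equiv.swap i (i + 1))) = truncMove k (i + 1) :=
    algHom_ext fun j => by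
      rw [AlgHom.comp_apply, rename_X, hφ]
      simp only [truncMove, aeval_X, Equiv.swap_apply_def]
      split_ifs <;> first | rfl | omega
  have hφ_X : φ (X i - X (i + 1)) = X k := by
    rw [hφ, map_sub]
    simp only [truncMove, aeval_X]
    split_ifs <;> first | omega | exact sub_zero _
  calc X k * BSit k (i - k) (truncOp (i + 1) (Dop i f))
      = φ (X i - X (i + 1)) * φ (ddiff i f) := by rw [hφ_X, BSit_eq_pow_apply, Dop]; rfl
    _ = φ f - φ.comp (rename (Equiv.swap i (i + 1))) f := by
      rw [← map_mul, mul_ddiff, map_sub, swapVar]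
      rfl
    _ = truncMove k i f - truncMove k (i + 1) f := by rw [hφ_swap, ← hφ]

theorem Bop_Dop (i : ℕ) (f : Pol) :
    Bop i (Dop i f) =
      ∑ k ∈ Finset.range (i + 1), (truncMove k i f - truncMove k (i + 1) f) :=
  Finset.sum_congr rfl fun _ hk =>
    X_mul_BSit_truncOp_Dop (Nat.lt_succ_iff.mp (Finset.mem_range.mp hk)) f

theorem sum_range_Bop_Dop (n : ℕ) (f : Pol) :
    ∑ i ∈ Finset.range n, Bop i (Dop i f) =
      ∑ k ∈ Finset.range n, (truncOp (k + 1) f - truncMove k n f) := by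
  simp_rw [Bop_Dop, Finset.sum_range_sum_range_succ_sub (fun k a => truncMove k a f),
    truncMove_self]

theorem Bop_Dop_eq_zero {n i : ℕ} {f : Pol} (hf : f.vars ⊆ Finset.range n) (hi : n ≤ i) :
    Bop i (Dop i f) = 0 := by
  have hvars : ∀ a, n ≤ a → a ∉ f.vars := fun a ha h => by
    have := Finset.mem_range.mp (hf h)
    omega
  rw [Bop_Dop]
  refine Finset.sum_eq_zero fun k _ => ?_
  rw [truncMove_of_notMem_vars (hvars i hi), truncMove_of_notMem_vars (hvars (i + 1) (by omega)),
    sub_self]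

end

/-- for every `f` with no constant term, `Σ_{i≥1} B_i(D_i f) = f`:
the slide creators are creation operators for the slide extractors. -/
theorem stmt_10 (f : Pol) (hf : constantCoeff f = 0) :
    {i : ℕ | Bop i (Dop i f) ≠ 0}.Finite ∧
    ∑ᶠ i : ℕ, Bop i (Dop i f) = f := by
  obtain ⟨N, hN⟩ := f.vars.exists_nat_subset_range
  have hsupp : (Function.support fun i => Bop i (Dop i f)) ⊆ Finset.range N := fun i hi => by
    by_contra h
    exact hi (Bop_Dop_eq_zero hN (by simpa using h))
  refine ⟨(Finset.range N).finite_toSet.subset hsupp, ?_⟩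
  have hN_vars : N ∉ f.vars := fun h => (Finset.mem_range.mp (hN h)).false
  rw [finsum_eq_sum_of_support_subset _ hsupp, sum_range_Bop_Dop]
  simp_rw [truncMove_of_notMem_vars hN_vars]
  rw [Finset.sum_range_sub (fun k => truncOp k f), truncOp_of_vars_subset hN, truncOp_zero_apply,
    hf, map_zero, sub_zero]
end

section
/- For every j ≥ 1 and every weakly increasing sequence a of positive integers, the polynomial R_j(𝔉_a) is either 0 or is equal to 𝔉_b for some weakly increasing sequence b of positive integers. -/
/-
Conventions: `Pol = MvPolynomial ℕ ℤ` with the Lean variable `X i` representing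
the paper's variable `x_{i+1}` (0-indexed).  All operators carrying a paper index
`i ≥ 1` are represented by Lean operators indexed by `i : ℕ` (Lean `i` ↔ paper `i+1`),
and sequences of positive integers are represented by sequences of natural numbers
(entry `v` ↔ paper entry `v+1`).
-/

open MvPolynomial
open scoped Classical

/-!
`R_j` kills the monomial of a compatible sequence `b` that takes the value `j` and relabels the
others by the order-preserving bijection `ℕ ∖ {j} ≃ ℕ`. The relabelled sequences are exactly the
monotone `c ≤ u := predAbove j ∘ a` that increase strictly at the ascents of `a`. This set is
closed under pointwise maximum, so (when nonempty) it has a greatest element `e`. Maximality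
forces `e` to ascend only where `a` does, since elsewhere `e` could be raised at one position; so
the set is exactly the set of compatible sequences of `e`, and `R_j 𝔉_a = 𝔉_e`.
-/

namespace BergeronSottile

def predAbove (j n : ℕ) : ℕ := if n < j then n else n - 1

def succAbove (j n : ℕ) : ℕ := if n < j then n else n + 1

lemma predAbove_monotone (j : ℕ) : Monotone (predAbove j) := by
  intro m n h; unfold predAbove; split_ifs <;> omega

lemma predAbove_lt_predAbove {j m n : ℕ} (hm : m ≠ j) (hn : n ≠ j) (h : m < n) :
    predAbove j m < predAbove j n := by
  unfold predAbove; split_ifs <;> omega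

lemma predAbove_injOn (j : ℕ) : Set.InjOn (predAbove j) {n | n ≠ j} := by
  intro m hm n hn h; unfold predAbove at h; simp only [Set.mem_ofPred_eq] at hm hn
  split_ifs at h <;> omega

lemma predAbove_succAbove (j n : ℕ) : predAbove j (succAbove j n) = n := by
  unfold predAbove succAbove; split_ifs <;> omega

lemma succAbove_ne (j n : ℕ) : succAbove j n ≠ j := by
  unfold succAbove; split_ifs <;> omega

lemma succAbove_strictMono (j : ℕ) : StrictMono (succAbove j) := by
  intro m n h; unfold succAbove; split_ifs <;> omega

lemma succAbove_le_of_le_predAbove {j m n : ℕ} (h : m ≤ predAbove j n) (hn : n ≠ 0 ∨ j ≠ 0) :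
    succAbove j m ≤ n := by
  unfold predAbove at h; unfold succAbove; split_ifs at * <;> omega

lemma BS_X (j n : ℕ) : BS j (X n) = if n = j then 0 else X (predAbove j n) := by
  simp only [BS, aeval_X, predAbove]
  split_ifs <;> first | rfl | omega

lemma BS_prod_X (j : ℕ) {k : ℕ} (b : Fin k → ℕ) :
    BS j (∏ t, X (b t)) = if ∀ t, b t ≠ j then ∏ t, X (predAbove j (b t)) else 0 := by
  simp only [map_prod, BS_X]
  split_ifs with hb
  · exact Finset.prod_congr rfl fun t _ => if_neg (hb t)
  · push Not at hb
    obtain ⟨t, ht⟩ := hb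
    exact Finset.prod_eq_zero (Finset.mem_univ t) (if_pos ht)

lemma monotone_iff_forall_le_succ {α : Type*} [Preorder α] {k : ℕ} {c : Fin k → α} :
    Monotone c ↔ ∀ (t : ℕ) (h : t + 1 < k), c ⟨t, Nat.lt_of_succ_lt h⟩ ≤ c ⟨t + 1, h⟩ := by
  cases k with
  | zero => exact ⟨fun _ t h => absurd h (by omega), fun _ s => s.elim0⟩
  | succ n =>
    rw [Fin.monotone_iff_le_succ]
    exact ⟨fun hc t h => hc ⟨t, by omega⟩, fun hc i => hc i (by omega)⟩

variable {k : ℕ}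

/-- `Compat a` is `CompatBelow a a`; relabelling by `R_j` lowers the bound `a` to some `u`. -/
def CompatBelow (a u c : Fin k → ℕ) : Prop :=
  Monotone c ∧ (∀ t, c t ≤ u t) ∧
  ∀ (t : ℕ) (h : t + 1 < k),
    a ⟨t, Nat.lt_of_succ_lt h⟩ < a ⟨t+1, h⟩ → c ⟨t, Nat.lt_of_succ_lt h⟩ < c ⟨t+1, h⟩

variable {a u : Fin k → ℕ}

lemma CompatBelow.sup {c d : Fin k → ℕ} (hc : CompatBelow a u c) (hd : CompatBelow a u d) :
    CompatBelow a u (c ⊔ d) :=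
  ⟨hc.1.sup hd.1, fun t => sup_le (hc.2.1 t) (hd.2.1 t),
    fun t h ht => max_lt_max (hc.2.2 t h ht) (hd.2.2 t h ht)⟩

lemma finite_setOf_compatBelow (a u : Fin k → ℕ) : {c | CompatBelow a u c}.Finite :=
  (Set.finite_Iic u).subset fun _ hc => hc.2.1

lemma exists_isGreatest_compatBelow (h : {c | CompatBelow a u c}.Nonempty) :
    ∃ e, IsGreatest {c | CompatBelow a u c} e := by
  set S := (finite_setOf_compatBelow a u).toFinset
  have hS : S.Nonempty := by simpa [S] using h
  refine ⟨S.sup' hS id, ?_, fun c hc => S.le_sup' id (by simpa [S] using hc)⟩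
  exact Finset.sup'_mem {c | CompatBelow a u c} (fun c hc d hd => CompatBelow.sup hc hd) S hS id
    (by simp [S])

lemma lt_of_isGreatest_compatBelow
    (hu : ∀ (t : ℕ) (h : t + 1 < k),
      u ⟨t, Nat.lt_of_succ_lt h⟩ < u ⟨t+1, h⟩ → a ⟨t, Nat.lt_of_succ_lt h⟩ < a ⟨t+1, h⟩)
    {e : Fin k → ℕ} (he : IsGreatest {c | CompatBelow a u c} e) (t : ℕ) (h : t + 1 < k)
    (hlt : e ⟨t, Nat.lt_of_succ_lt h⟩ < e ⟨t+1, h⟩) :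
    a ⟨t, Nat.lt_of_succ_lt h⟩ < a ⟨t+1, h⟩ := by
  by_contra hna
  have ht : t < k := by omega
  obtain ⟨⟨hmono, hle, hasc⟩, hmax⟩ := he
  have hu' : u ⟨t+1, h⟩ ≤ u ⟨t, ht⟩ := not_lt.mp (mt (hu t h) hna)
  have heT : e ⟨t, ht⟩ < u ⟨t, ht⟩ := by have := hle ⟨t+1, h⟩; omega
  -- raising `e` by one at `t` stays below `u` and compatible with `a`, contradicting maximality
  suffices hc : CompatBelow a u (Function.update e ⟨t, ht⟩ (e ⟨t, ht⟩ + 1)) by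
    have := hmax hc ⟨t, ht⟩
    simp at this
  refine ⟨monotone_iff_forall_le_succ.mpr fun s hs => ?_, fun s => ?_, fun s hs hs' => ?_⟩
  · have := monotone_iff_forall_le_succ.mp hmono s hs
    simp only [Function.update_apply, Fin.ext_iff]
    split_ifs <;> subst_vars <;> omega
  · have := hle s
    simp only [Function.update_apply]
    split_ifs <;> subst_vars <;> omega
  · have := hasc s hs hs'
    simp only [Function.update_apply, Fin.ext_iff]
    split_ifs <;> subst_vars <;> omega

lemma setOf_compatBelow_eq_setOf_compat
    (hu : ∀ (t : ℕ) (h : t + 1 < k),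
      u ⟨t, Nat.lt_of_succ_lt h⟩ < u ⟨t+1, h⟩ → a ⟨t, Nat.lt_of_succ_lt h⟩ < a ⟨t+1, h⟩)
    {e : Fin k → ℕ} (he : IsGreatest {c | CompatBelow a u c} e) :
    {c | CompatBelow a u c} = {c | Compat e c} := by
  ext c
  refine ⟨fun hc => ⟨hc.1, fun t => he.2 hc t, fun t h hlt => ?_⟩,
    fun hc => ⟨hc.1, fun t => (hc.2.1 t).trans (he.1.2.1 t), fun t h hlt => ?_⟩⟩
  · exact hc.2.2 t h (lt_of_isGreatest_compatBelow hu he t h hlt)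
  · exact hc.2.2 t h (he.1.2.2 t h hlt)

lemma BS_slide (j : ℕ) (a : Fin k → ℕ) :
    BS j (slide a) =
      ∑ᶠ c ∈ (fun b t => predAbove j (b t)) '' {b | Compat a b ∧ ∀ t, b t ≠ j}, ∏ t, X (c t) := by
  have hinj : Set.InjOn (fun (b : Fin k → ℕ) t => predAbove j (b t))
      {b | Compat a b ∧ ∀ t, b t ≠ j} := fun b hb b' hb' hbb' =>
    funext fun t => predAbove_injOn j (hb.2 t) (hb'.2 t) (congrFun hbb' t)
  rw [finsum_mem_image hinj]
  calc BS j (slide a)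
      = ∑ᶠ b ∈ {b | Compat a b}, BS j (∏ t, X (b t)) :=
        (BS j).toAddMonoidHom.map_finsum_mem _ (finite_setOf_compatBelow a a)
    _ = ∑ᶠ b ∈ {b | Compat a b},
          if ∀ t, b t ≠ j then ∏ t, X (predAbove j (b t)) else (0 : Pol) :=
        finsum_mem_congr rfl fun b _ => BS_prod_X j b
    _ = ∑ᶠ b ∈ {b | Compat a b ∧ ∀ t, b t ≠ j},
          if ∀ t, b t ≠ j then ∏ t, X (predAbove j (b t)) else (0 : Pol) := by
        refine finsum_mem_inter_support_eq' _ _ _ fun b hb => ?_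
        simp only [Function.mem_support, ne_eq, ite_eq_right_iff, Classical.not_imp] at hb
        simp [hb.1]
    _ = _ := finsum_mem_congr rfl fun b hb => if_pos hb.2

lemma image_predAbove_eq (j : ℕ) (a : Fin k → ℕ)
    (hne : {b | Compat a b ∧ ∀ t, b t ≠ j}.Nonempty) :
    (fun b t => predAbove j (b t)) '' {b | Compat a b ∧ ∀ t, b t ≠ j} =
      {c | CompatBelow a (fun t => predAbove j (a t)) c} := by
  obtain ⟨b₀, hb₀, hb₀j⟩ := hne
  ext c
  constructor
  · rintro ⟨b, ⟨⟨hmono, hle, hasc⟩, hbj⟩, rfl⟩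
    exact ⟨(predAbove_monotone j).comp hmono, fun t => predAbove_monotone j (hle t),
      fun t h hlt => predAbove_lt_predAbove (hbj _) (hbj _) (hasc t h hlt)⟩
  · rintro ⟨hmono, hle, hasc⟩
    refine ⟨fun t => succAbove j (c t), ⟨⟨(succAbove_strictMono j).monotone.comp hmono,
      fun t => succAbove_le_of_le_predAbove (hle t) ?_,
      fun t h hlt => succAbove_strictMono j (hasc t h hlt)⟩, fun t => succAbove_ne j _⟩,
      funext fun t => predAbove_succAbove j _⟩
    -- `b₀` excludes `a t = 0 = j`, where the truncated value `predAbove 0 0 = 0` has no preimage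
    have := hb₀.2.1 t
    have := hb₀j t
    omega

end BergeronSottile

open BergeronSottile in
theorem stmt_15_general (j : ℕ) {k : ℕ} (a : Fin k → ℕ) :
    BS j (slide a) = 0 ∨
    ∃ (k' : ℕ) (b : Fin k' → ℕ), Monotone b ∧ BS j (slide a) = slide b := by
  rw [BS_slide]
  rcases {b | Compat a b ∧ ∀ t, b t ≠ j}.eq_empty_or_nonempty with hS | hS
  · exact Or.inl (by rw [hS, Set.image_empty, finsum_mem_empty])
  · right
    rw [image_predAbove_eq j a hS]
    obtain ⟨e, he⟩ := exists_isGreatest_compatBelow (image_predAbove_eq j a hS ▸ hS.image _)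
    refine ⟨k, e, he.1.1, ?_⟩
    rw [slide, setOf_compatBelow_eq_setOf_compat
      (fun t h hlt => (predAbove_monotone j).reflect_lt hlt) he]

/-- applying a Bergeron–Sottile operator to a slide polynomial gives
`0` or another slide polynomial. -/
theorem stmt_15 (j : ℕ) {k : ℕ} (a : Fin k → ℕ) (ha : Monotone a) :
    BS j (slide a) = 0 ∨
    ∃ (k' : ℕ) (b : Fin k' → ℕ), Monotone b ∧ BS j (slide a) = slide b :=
  stmt_15_general j a
end

section
/- For every nonempty weakly increasing sequence a = (a₁ ≤ ⋯ ≤ a_k) of positive integers, the monomial satisfies x_{a₁}⋯x_{a_k} = Σ_{b ∈ E(a)} ε(b)·𝔉_b, where the weakly increasing sequences b ∈ E(a) are pairwise distinct; in particular the slide expansion of any monomial is signed multiplicity-free, i.e. all its coefficients lie in {−1,0,1}. -/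
/-
Conventions: `Pol = MvPolynomial ℕ ℤ` with the Lean variable `X i` representing
the paper's variable `x_{i+1}` (0-indexed).  All operators carrying a paper index
`i ≥ 1` are represented by Lean operators indexed by `i : ℕ` (Lean `i` ↔ paper `i+1`),
and sequences of positive integers are represented by sequences of natural numbers
(entry `v` ↔ paper entry `v+1`).
-/

open MvPolynomial
open scoped Classical

/-- Membership in the set `E(a)` of the paper (for `a` weakly increasing), described
position by position: within a block of equal values of `a`, consecutive entries of
`b` increase by `0` or `1`; at the last position of each block (including the final
position), the entry of `b` is the value of `a` there or one less; and at the start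
of each new block the entry of `b` strictly exceeds the previous value of `a`. -/
def memE {k : ℕ} (a b : Fin k → ℕ) : Prop :=
  (∀ (j : ℕ) (h : j + 1 < k),
      (a ⟨j, Nat.lt_of_succ_lt h⟩ = a ⟨j+1, h⟩ →
        (b ⟨j+1, h⟩ = b ⟨j, Nat.lt_of_succ_lt h⟩ ∨
         b ⟨j+1, h⟩ = b ⟨j, Nat.lt_of_succ_lt h⟩ + 1)) ∧
      (a ⟨j, Nat.lt_of_succ_lt h⟩ < a ⟨j+1, h⟩ →
        ((b ⟨j, Nat.lt_of_succ_lt h⟩ = a ⟨j, Nat.lt_of_succ_lt h⟩ ∨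
          b ⟨j, Nat.lt_of_succ_lt h⟩ + 1 = a ⟨j, Nat.lt_of_succ_lt h⟩) ∧
         a ⟨j, Nat.lt_of_succ_lt h⟩ < b ⟨j+1, h⟩))) ∧
  ∀ h : 0 < k,
    b ⟨k-1, Nat.sub_lt h Nat.one_pos⟩ = a ⟨k-1, Nat.sub_lt h Nat.one_pos⟩ ∨
    b ⟨k-1, Nat.sub_lt h Nat.one_pos⟩ + 1 = a ⟨k-1, Nat.sub_lt h Nat.one_pos⟩

/-- The exponent of the sign `ε(b)`: the total of the rises; at a position `j` that is
not the last of its block the rise is `b_{j+1} − b_j`, and at the last position of a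
block (value `M_i = a_j`) the rise is `a_j − b_j`; the total over a block starting at
`b₁` telescopes to `n(e) = M_i − b₁`. -/
def epsExp {k : ℕ} (a b : Fin k → ℕ) : ℕ :=
  ∑ j : Fin k,
    if h : (j : ℕ) + 1 < k then
      (if a j = a ⟨(j : ℕ) + 1, h⟩ then b ⟨(j : ℕ) + 1, h⟩ - b j else a j - b j)
    else a j - b j

/-- The sign `ε(b) = (−1)^{n(e¹)+⋯+n(e^p)}`. -/
def eps {k : ℕ} (a b : Fin k → ℕ) : ℤ := (-1) ^ epsExp a b

open Finset

/-!
Expanding each `slide b` into monomials, the identity says that for every sequence `c` the signed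
number of `b ∈ E(a)` for which `c` is compatible is `1` if `c = a` and `0` otherwise. Both
conditions only compare consecutive positions, so this signed count is a transfer sum over `b`,
computed from the right end. At each position the entry of `b` has two possible values (the next
entry of `b` or one less inside a block of `a`; the value of `a` or one less at the end of a
block), and the two choices carry opposite signs. The partial sum does not depend on the next
entry `B` of `b` as long as `B` is at least the next entry of `c` (`chainSum_eq_of_le`), so the two
choices cancel unless the entry of `c` equals the larger value; from the right end this forces
`c = a`.
-/

section General

variable {k n : ℕ}

lemma sum_piFinset_succ {α M : Type*} [AddCommMonoid M] (s : Finset α)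
    (f : (Fin (k + 1) → α) → M) :
    ∑ b ∈ Fintype.piFinset (fun _ => s), f b =
      ∑ x ∈ s, ∑ b ∈ Fintype.piFinset (fun _ : Fin k => s), f (Fin.snoc b x) := by
  have h := filter_piFinset_eq_map_snocEquiv (fun _ : Fin (k + 1) => s) fun _ => True
  simp only [filter_true] at h
  rw [h, sum_map, sum_product]
  rfl

lemma sum_range_eq_add_pred {M : Type*} [AddCommMonoid M] {B : ℕ} (hB : B < n) (f : ℕ → M)
    (hf : ∀ x, x ≠ B → x + 1 ≠ B → f x = 0) :
    ∑ x ∈ range n, f x = f B + if B = 0 then 0 else f (B - 1) := by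
  rcases B with _ | B
  · rw [sum_eq_single_of_mem 0 (mem_range.2 hB) fun x _ hx => hf x hx (by omega), if_pos rfl,
      add_zero]
  · rw [if_neg B.succ_ne_zero, Nat.add_sub_cancel]
    exact sum_eq_add_of_mem _ _ (mem_range.2 hB) (mem_range.2 (by omega)) (by omega)
      fun x _ hx => hf x hx.1 (by omega)

lemma finsum_mem_setOf_eq_sum_ite {α M : Type*} [AddCommMonoid M] {p : α → Prop}
    [DecidablePred p] {t : Finset α} (ht : ∀ x, p x → x ∈ t) (f : α → M) :
    ∑ᶠ x ∈ {x | p x}, f x = ∑ x ∈ t, if p x then f x else 0 := by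
  rw [← sum_filter]
  exact finsum_mem_eq_sum_of_subset f (fun x hx => mem_filter.2 ⟨ht x hx.1, hx.1⟩)
    fun x hx => (mem_filter.1 hx).2

lemma snoc_succ_eq_dite {α : Type*} (a : Fin k → α) (A : α) (j : Fin k) :
    (Fin.snoc a A : Fin (k + 1) → α) j.succ =
      if h : (j : ℕ) + 1 < k then a ⟨j + 1, h⟩ else A := by
  simp only [Fin.snoc, Fin.val_succ, cast_eq]
  rfl

lemma monotone_of_le_next {α : Type*} [Preorder α] {f : Fin k → α}
    (h : ∀ (j : ℕ) (hj : j + 1 < k), f ⟨j, Nat.lt_of_succ_lt hj⟩ ≤ f ⟨j + 1, hj⟩) :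
    Monotone f := by
  cases k with
  | zero => exact fun i => i.elim0
  | succ k => exact Fin.monotone_iff_le_succ.2 fun i => h i (by simp)

end General

section Chain

variable {k n : ℕ}

/-- `IsLink A x c A' B C`: the conditions of `b ∈ E(a)` and of `c` being compatible with `b` that
relate a position where `(a, b, c)` take the values `(A, x, c)` to the next position, where they
take the values `(A', B, C)`. -/
def IsLink (A x c A' B C : ℕ) : Prop :=
  c ≤ x ∧ c ≤ C ∧
    ((A = A' ∧ (B = x ∨ B = x + 1) ∧ (x < B → c < C)) ∨
      (A < A' ∧ (x = A ∨ x + 1 = A) ∧ A < B ∧ c < C))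

def linkRise (A x A' B : ℕ) : ℕ := if A = A' then B - x else A - x

/-- The position after the last one carries the values `(A, B, C)`. -/
def IsLinkChain (a b c : Fin k → ℕ) (A B C : ℕ) : Prop :=
  ∀ j, IsLink (a j) (b j) (c j)
    ((Fin.snoc a A : Fin (k + 1) → ℕ) j.succ) ((Fin.snoc b B : Fin (k + 1) → ℕ) j.succ)
    ((Fin.snoc c C : Fin (k + 1) → ℕ) j.succ)

def chainRise (a b : Fin k → ℕ) (A B : ℕ) : ℕ :=
  ∑ j, linkRise (a j) (b j)
    ((Fin.snoc a A : Fin (k + 1) → ℕ) j.succ) ((Fin.snoc b B : Fin (k + 1) → ℕ) j.succ)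

noncomputable def chainSum (n : ℕ) (a c : Fin k → ℕ) (A B C : ℕ) : ℤ :=
  ∑ b ∈ Fintype.piFinset fun _ => range n,
    if IsLinkChain a b c A B C then (-1) ^ chainRise a b A B else 0

lemma isLinkChain_succ {a b c : Fin (k + 1) → ℕ} {A B C : ℕ} :
    IsLinkChain a b c A B C ↔
      IsLinkChain (Fin.init a) (Fin.init b) (Fin.init c) (a (Fin.last k)) (b (Fin.last k))
        (c (Fin.last k)) ∧
      IsLink (a (Fin.last k)) (b (Fin.last k)) (c (Fin.last k)) A B C := by
  simp only [IsLinkChain, Fin.forall_fin_succ', Fin.succ_castSucc, Fin.snoc_castSucc,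
    Fin.succ_last, Fin.snoc_last, Fin.snoc_init_self]
  rfl

lemma chainRise_succ {a b : Fin (k + 1) → ℕ} {A B : ℕ} :
    chainRise a b A B =
      chainRise (Fin.init a) (Fin.init b) (a (Fin.last k)) (b (Fin.last k)) +
        linkRise (a (Fin.last k)) (b (Fin.last k)) A B := by
  simp only [chainRise, Fin.sum_univ_castSucc, Fin.succ_castSucc, Fin.snoc_castSucc,
    Fin.succ_last, Fin.snoc_last, Fin.snoc_init_self]
  rfl

lemma chainSum_zero (a c : Fin 0 → ℕ) (A B C : ℕ) : chainSum n a c A B C = 1 := by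
  simp [chainSum, IsLinkChain, chainRise]

lemma chainSum_succ (a c : Fin (k + 1) → ℕ) (A B C : ℕ) :
    chainSum n a c A B C =
      ∑ x ∈ range n, if IsLink (a (Fin.last k)) x (c (Fin.last k)) A B C then
        (-1) ^ linkRise (a (Fin.last k)) x A B *
          chainSum n (Fin.init a) (Fin.init c) (a (Fin.last k)) x (c (Fin.last k))
      else 0 := by
  rw [chainSum, sum_piFinset_succ]
  refine sum_congr rfl fun x _ => ?_
  split_ifs with hL
  · rw [chainSum, mul_sum]
    refine sum_congr rfl fun b _ => ?_
    simp [isLinkChain_succ, chainRise_succ, hL, pow_add, mul_comm]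
  · exact sum_eq_zero fun b _ => by simp [isLinkChain_succ, hL]

lemma isLink_self_iff {A B c C : ℕ} : IsLink A B c A B C ↔ c ≤ B ∧ c ≤ C := by
  unfold IsLink; omega

lemma isLink_pred_iff {A B c C : ℕ} (hB : 0 < B) :
    IsLink A (B - 1) c A B C ↔ c < B ∧ c < C := by
  unfold IsLink; omega

lemma isLink_of_lt_self_iff {A A' B c C : ℕ} (hA : A < A') :
    IsLink A A c A' B C ↔ c ≤ A ∧ A < B ∧ c < C := by
  unfold IsLink; omega

lemma isLink_of_lt_pred_iff {A A' B c C : ℕ} (hA : A < A') (h0 : 0 < A) :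
    IsLink A (A - 1) c A' B C ↔ c < A ∧ A < B ∧ c < C := by
  unfold IsLink; omega

lemma chainSum_succ_of_eq (a c : Fin (k + 1) → ℕ) {A B C : ℕ} (hA : a (Fin.last k) = A)
    (hB : B < n) :
    chainSum n a c A B C =
      (if c (Fin.last k) ≤ B ∧ c (Fin.last k) ≤ C then
        chainSum n (Fin.init a) (Fin.init c) A B (c (Fin.last k)) else 0) -
      (if c (Fin.last k) < B ∧ c (Fin.last k) < C then
        chainSum n (Fin.init a) (Fin.init c) A (B - 1) (c (Fin.last k)) else 0) := by
  rw [chainSum_succ, sum_range_eq_add_pred hB]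
  · subst hA
    simp only [isLink_self_iff, linkRise, if_true, Nat.sub_self, pow_zero, one_mul]
    rcases Nat.eq_zero_or_pos B with rfl | hB0
    · simp
    · rw [if_neg hB0.ne', isLink_pred_iff hB0, Nat.sub_sub_self hB0, pow_one]
      split_ifs <;> ring
  · intro x hxB hxB'
    rw [if_neg]
    rintro ⟨-, -, ⟨-, hx | hx, -⟩ | ⟨hlt, -⟩⟩ <;> omega

lemma chainSum_succ_of_lt (a c : Fin (k + 1) → ℕ) {A B C : ℕ} (hA : a (Fin.last k) < A)
    (hB : B < n) :
    chainSum n a c A B C =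
      if a (Fin.last k) < B ∧ c (Fin.last k) < C then
        (if c (Fin.last k) ≤ a (Fin.last k) then chainSum n (Fin.init a) (Fin.init c)
          (a (Fin.last k)) (a (Fin.last k)) (c (Fin.last k)) else 0) -
        (if c (Fin.last k) < a (Fin.last k) then chainSum n (Fin.init a) (Fin.init c)
          (a (Fin.last k)) (a (Fin.last k) - 1) (c (Fin.last k)) else 0)
      else 0 := by
  rw [chainSum_succ]
  by_cases hlink : a (Fin.last k) < B ∧ c (Fin.last k) < C
  · rw [if_pos hlink, sum_range_eq_add_pred (hlink.1.trans hB)]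
    · simp only [isLink_of_lt_self_iff hA, linkRise, if_neg hA.ne, Nat.sub_self, pow_zero,
        one_mul, hlink.1, hlink.2, and_true]
      rcases Nat.eq_zero_or_pos (a (Fin.last k)) with h0 | h0
      · simp [h0]
      · rw [if_neg h0.ne', isLink_of_lt_pred_iff hA h0, Nat.sub_sub_self h0, pow_one]
        simp only [hlink.1, hlink.2, and_true]
        split_ifs <;> ring
    · intro x hxB hxB'
      rw [if_neg]
      rintro ⟨-, -, ⟨hA', -⟩ | ⟨-, hx | hx, -⟩⟩ <;> omega
  · rw [if_neg hlink]
    refine sum_eq_zero fun x _ => if_neg ?_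
    rintro ⟨-, -, ⟨hA', -⟩ | ⟨-, -, h1, h2⟩⟩
    · omega
    · exact hlink ⟨h1, h2⟩

lemma chainSum_succ_of_gt (a c : Fin (k + 1) → ℕ) {A B C : ℕ} (hA : A < a (Fin.last k)) :
    chainSum n a c A B C = 0 := by
  rw [chainSum_succ]
  refine sum_eq_zero fun x _ => if_neg ?_
  rintro ⟨-, -, ⟨hA', -⟩ | ⟨hlt, -⟩⟩ <;> omega

theorem chainSum_eq_of_le (a c : Fin k → ℕ) {A B B' C : ℕ} (hB : C ≤ B) (hB' : C ≤ B')
    (hBn : B < n) (hBn' : B' < n) : chainSum n a c A B C = chainSum n a c A B' C := by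
  induction k generalizing A B B' C with
  | zero => rw [chainSum_zero, chainSum_zero]
  | succ k ih =>
    rcases lt_trichotomy (a (Fin.last k)) A with hA | rfl | hA
    · rw [chainSum_succ_of_lt a c hA hBn, chainSum_succ_of_lt a c hA hBn']
      generalize a (Fin.last k) = x at *
      generalize c (Fin.last k) = y at *
      rcases lt_trichotomy y x with h | rfl | h
      · by_cases hx : x < n
        · rw [ih _ _ (B' := x - 1) h.le (by omega) hx (by omega)]
          simp [h, h.le]
        · simp [show ¬x < B by omega, show ¬x < B' by omega]
      · by_cases hy : y < C
        · simp [hy, show y < B by omega, show y < B' by omega]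
        · simp [hy]
      · simp [h.not_ge, h.not_gt]
    · rw [chainSum_succ_of_eq a c rfl hBn, chainSum_succ_of_eq a c rfl hBn']
      generalize c (Fin.last k) = y at *
      rcases lt_trichotomy y C with h | rfl | h
      · rw [ih _ _ (B := B) (B' := B - 1) (by omega) (by omega) hBn (by omega),
          ih _ _ (B := B') (B' := B' - 1) (by omega) (by omega) hBn' (by omega)]
        simp [h, h.le, show y < B by omega, show y < B' by omega, show y ≤ B by omega,
          show y ≤ B' by omega]
      · simp [hB, hB', ih _ _ hB hB' hBn hBn']
      · simp [h.not_ge, h.not_gt]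
    · rw [chainSum_succ_of_gt a c hA, chainSum_succ_of_gt a c hA]

lemma chainSum_sub_chainSum_pred (a c : Fin k → ℕ) (A M x : ℕ) (hM : M < n) :
    ((if x ≤ M then chainSum n a c A M x else 0) -
      if x < M then chainSum n a c A (M - 1) x else 0) =
      if x = M then chainSum n a c A M M else 0 := by
  rcases lt_trichotomy x M with h | rfl | h
  · rw [chainSum_eq_of_le a c (B' := M - 1) h.le (by omega) hM (by omega)]
    simp [h, h.le, h.ne]
  · simp
  · simp [h.not_ge, h.not_gt, h.ne']

theorem chainSum_self (a c : Fin k → ℕ) {A : ℕ} (ha : Monotone a) (hA : ∀ j, a j ≤ A)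
    (hAn : A < n) : chainSum n a c A A A = if c = a then 1 else 0 := by
  induction k generalizing A with
  | zero => simp [chainSum_zero, Subsingleton.elim c a]
  | succ k ih =>
    have hal : a (Fin.last k) < n := (hA _).trans_lt hAn
    have hlast : chainSum n a c A A A =
        if c (Fin.last k) = a (Fin.last k) then
          chainSum n (Fin.init a) (Fin.init c) (a (Fin.last k)) (a (Fin.last k)) (a (Fin.last k))
        else 0 := by
      rcases (hA (Fin.last k)).eq_or_lt with hA' | hA'
      · rw [chainSum_succ_of_eq a c hA' hAn, ← hA']
        simpa using chainSum_sub_chainSum_pred (Fin.init a) (Fin.init c) _ _ _ hal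
      · rw [chainSum_succ_of_lt a c hA' hAn]
        by_cases h : c (Fin.last k) < A
        · rw [if_pos ⟨hA', h⟩]
          exact chainSum_sub_chainSum_pred _ _ _ _ _ hal
        · rw [if_neg (by tauto), if_neg (by omega)]
    have hca : c = a ↔ c (Fin.last k) = a (Fin.last k) ∧ Fin.init c = Fin.init a := by
      conv_lhs => rw [← Fin.snoc_init_self c, ← Fin.snoc_init_self a]
      rw [Fin.snoc_inj, and_comm]
    rw [hlast, ih (Fin.init a) (Fin.init c) (fun i j h => ha (Fin.castSucc_le_castSucc_iff.2 h))
      (fun j => ha (Fin.le_last _)) hal]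
    simp only [hca, ite_and]

end Chain

section Bridge

variable {k : ℕ} {a b c : Fin k → ℕ} {A : ℕ}

lemma memE_le (ha : Monotone a) (hb : memE a b) : b ≤ a := by
  intro j
  change b j ≤ a j
  obtain ⟨m, hm⟩ : ∃ m, (j : ℕ) + m + 1 = k := ⟨k - j - 1, by omega⟩
  induction m generalizing j with
  | zero =>
    have hj : (⟨k - 1, by omega⟩ : Fin k) = j := Fin.ext (by simp; omega)
    have := hb.2 (by omega)
    rw [hj] at this
    omega
  | succ m ih =>
    have hj : (j : ℕ) + 1 < k := by omega
    have hnext := ih ⟨j + 1, hj⟩ (by simp; omega)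
    obtain ⟨hsame, hnew⟩ := hb.1 j hj
    simp only [Fin.eta] at hsame hnew
    rcases (ha (show j ≤ ⟨j + 1, hj⟩ from Fin.le_def.2 (by simp))).eq_or_lt with h | h
    · have := hsame h
      omega
    · have := (hnew h).1
      omega

lemma memE_monotone (ha : Monotone a) (hb : memE a b) : Monotone b :=
  monotone_of_le_next fun j hj => by
    obtain ⟨hsame, hnew⟩ := hb.1 j hj
    have hba : b ⟨j, by omega⟩ ≤ a ⟨j, by omega⟩ := memE_le ha hb _
    have hle : (⟨j, by omega⟩ : Fin k) ≤ ⟨j + 1, hj⟩ := Fin.le_def.2 (Nat.le_succ j)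
    rcases (ha hle).eq_or_lt with e | l
    · rcases hsame e with h | h <;> omega
    · have := (hnew l).2
      omega

lemma isLinkChain_of_memE (ha : Monotone a) (hA : ∀ j, a j < A) (hb : memE a b)
    (hc : Compat b c) : IsLinkChain a b c A A A := by
  obtain ⟨hcm, hcb, hstr⟩ := hc
  intro j
  simp only [snoc_succ_eq_dite]
  have hba := memE_le ha hb j
  by_cases h : (j : ℕ) + 1 < k
  · simp only [dif_pos h]
    obtain ⟨hsame, hnew⟩ := hb.1 j h
    have hs := hstr j h
    simp only [Fin.eta] at hsame hnew hs
    have hle : j ≤ ⟨j + 1, h⟩ := Fin.le_def.2 (by simp)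
    refine ⟨hcb j, hcm hle, ?_⟩
    rcases (ha hle).eq_or_lt with e | l
    · exact Or.inl ⟨e, hsame e, hs⟩
    · exact Or.inr ⟨l, (hnew l).1, (hnew l).2, hs (hba.trans_lt (hnew l).2)⟩
  · simp only [dif_neg h]
    have hj : (⟨k - 1, by omega⟩ : Fin k) = j := Fin.ext (by simp; omega)
    have hlast := hb.2 (by omega)
    rw [hj] at hlast
    have hcA : c j < A := (hcb j).trans_lt (hba.trans_lt (hA j))
    exact ⟨hcb j, hcA.le, Or.inr ⟨hA j, hlast, hA j, hcA⟩⟩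

lemma memE_and_compat_of_isLinkChain (hA : ∀ j, a j < A) (h : IsLinkChain a b c A A A) :
    memE a b ∧ Compat b c := by
  have hnext : ∀ (j : ℕ) (hj : j + 1 < k),
      IsLink (a ⟨j, by omega⟩) (b ⟨j, by omega⟩) (c ⟨j, by omega⟩)
        (a ⟨j + 1, hj⟩) (b ⟨j + 1, hj⟩) (c ⟨j + 1, hj⟩) := fun j hj => by
    simpa [snoc_succ_eq_dite, hj] using h ⟨j, by omega⟩
  refine ⟨⟨fun j hj => ?_, fun hk => ?_⟩, monotone_of_le_next fun j hj => (hnext j hj).2.1,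
    fun j => (h j).1, fun j hj hlt => ?_⟩
  · obtain ⟨-, -, ⟨e, hB, -⟩ | ⟨l, hx, hAB, -⟩⟩ := hnext j hj
    · exact ⟨fun _ => hB, fun h' => absurd e h'.ne⟩
    · exact ⟨fun h' => absurd h' l.ne, fun _ => ⟨hx, hAB⟩⟩
  · have hlast := h ⟨k - 1, by omega⟩
    simp only [snoc_succ_eq_dite, show ¬(k - 1 + 1 < k) by omega, dif_neg,
      not_false_eq_true] at hlast
    obtain ⟨-, -, ⟨e, -⟩ | ⟨-, hx, -⟩⟩ := hlast
    · exact absurd e (hA _).ne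
    · exact hx
  · obtain ⟨-, -, ⟨-, -, hc⟩ | ⟨-, -, -, hc⟩⟩ := hnext j hj
    · exact hc hlt
    · exact hc

theorem memE_and_compat_iff_isLinkChain (ha : Monotone a) (hA : ∀ j, a j < A) :
    memE a b ∧ Compat b c ↔ IsLinkChain a b c A A A :=
  ⟨fun h => isLinkChain_of_memE ha hA h.1 h.2, memE_and_compat_of_isLinkChain hA⟩

lemma epsExp_eq_chainRise (hA : ∀ j, a j < A) (b : Fin k → ℕ) (B : ℕ) :
    epsExp a b = chainRise a b A B := by
  refine sum_congr rfl fun j _ => ?_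
  simp only [linkRise, snoc_succ_eq_dite]
  have := hA j
  split_ifs <;> omega

theorem sum_eps_memE_compat (ha : Monotone a) (hA : ∀ j, a j < A) (c : Fin k → ℕ) :
    ∑ b ∈ Fintype.piFinset (fun _ => range (A + 1)),
      (if memE a b ∧ Compat b c then eps a b else 0) = if c = a then 1 else 0 := by
  rw [← chainSum_self a c ha (fun j => (hA j).le) A.lt_succ_self, chainSum]
  refine sum_congr rfl fun b _ => ?_
  by_cases hb : IsLinkChain a b c A A A
  · rw [if_pos ((memE_and_compat_iff_isLinkChain ha hA).2 hb), if_pos hb, eps,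
      epsExp_eq_chainRise hA]
  · rw [if_neg (mt (memE_and_compat_iff_isLinkChain ha hA).1 hb), if_neg hb]

end Bridge

theorem prod_X_eq_finsum_eps_smul_slide {k : ℕ} {a : Fin k → ℕ} (ha : Monotone a) :
    (∏ j, X (a j) : Pol) = ∑ᶠ b ∈ {b | memE a b}, eps a b • slide b := by
  set A := univ.sup a + 1
  set box := Fintype.piFinset fun _ : Fin k => range (A + 1)
  have hA : ∀ j, a j < A := fun j => Nat.lt_succ_of_le (le_sup (mem_univ j))
  have hbox : ∀ b, b ≤ a → b ∈ box := fun b hb =>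
    Fintype.mem_piFinset.2 fun j => mem_range.2 (((hb j).trans_lt (hA j)).trans A.lt_succ_self)
  have hslide :
      ∀ b, b ≤ a → slide b = ∑ c ∈ box, if Compat b c then ∏ j, X (c j) else 0 :=
    fun b hb => finsum_mem_setOf_eq_sum_ite
      (fun c hc => hbox c fun j => (hc.2.1 j).trans (hb j)) _
  have hcount : ∀ c, ∑ b ∈ box, (if memE a b ∧ Compat b c then eps a b else 0) =
      if c = a then 1 else 0 := sum_eps_memE_compat ha hA
  calc (∏ j, X (a j) : Pol)
      = ∑ c ∈ box, (if c = a then (1 : ℤ) else 0) • ∏ j, X (c j) := by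
        simp [ite_smul, hbox a le_rfl]
    _ = ∑ c ∈ box,
          (∑ b ∈ box, if memE a b ∧ Compat b c then eps a b else 0) • ∏ j, X (c j) := by
        simp only [hcount]
    _ = ∑ b ∈ box, if memE a b then eps a b • slide b else 0 := by
        simp only [sum_smul, ite_smul, zero_smul]
        rw [sum_comm]
        refine sum_congr rfl fun b _ => ?_
        by_cases hb : memE a b
        · simp [hb, hslide b (memE_le ha hb), smul_sum]
        · simp [hb]
    _ = ∑ᶠ b ∈ {b | memE a b}, eps a b • slide b :=
        (finsum_mem_setOf_eq_sum_ite (fun b hb => hbox b (memE_le ha hb)) _).symm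

theorem exists_finsum_sigma_eq_sum_smul_slide {k : ℕ} (t : Finset (Fin k → ℕ))
    (ht : ∀ b ∈ t, Monotone b) (w : (Fin k → ℕ) → ℤ) :
    ∃ c : (Σ n : ℕ, {e : Fin n → ℕ // Monotone e}) → ℤ,
      (∀ e, c e = 0 ∨ ∃ b ∈ t, c e = w b) ∧ {e | c e ≠ 0}.Finite ∧
      ∑ b ∈ t, w b • slide b = ∑ᶠ e, c e • slide e.2.1 := by
  let ι : {b : Fin k → ℕ // Monotone b} → Σ n : ℕ, {e : Fin n → ℕ // Monotone e} :=
    fun b => ⟨k, b⟩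
  have hι : Function.Injective ι := fun _ _ h => eq_of_heq (Sigma.mk.inj_iff.1 h).2
  let c := Function.extend ι (fun b => if b.1 ∈ t then w b.1 else 0) 0
  have hc : ∀ b, c (ι b) = if b.1 ∈ t then w b.1 else 0 := hι.extend_apply _ _
  have hc0 : ∀ e, e ∉ Set.range ι → c e = 0 := fun e he => by
    simp [c, Function.extend_apply' _ _ _ fun h => he h]
  have hsupp : ∀ e, c e ≠ 0 → e ∈ t.attach.image fun b => ι ⟨b.1, ht b.1 b.2⟩ := by
    intro e he
    obtain ⟨b, rfl⟩ : e ∈ Set.range ι := by_contra fun h => he (hc0 e h)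
    by_cases hb : b.1 ∈ t
    · exact mem_image.2 ⟨⟨b.1, hb⟩, mem_attach _ _, rfl⟩
    · rw [hc, if_neg hb] at he
      exact absurd rfl he
  refine ⟨c, fun e => ?_, (finite_toSet _).subset hsupp, ?_⟩
  · by_cases he : e ∈ Set.range ι
    · obtain ⟨b, rfl⟩ := he
      rw [hc]
      split_ifs with hb
      · exact Or.inr ⟨b.1, hb, rfl⟩
      · exact Or.inl rfl
    · exact Or.inl (hc0 e he)
  · rw [finsum_eq_finsetSum_of_support_subset _ fun e he => hsupp e (left_ne_zero_of_smul he),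
      sum_image fun (b : {x // x ∈ t}) _ b' _ h => Subtype.ext (Subtype.mk.inj (hι h)),
      ← sum_attach t]
    exact sum_congr rfl fun b _ => by rw [hc, if_pos b.2]

theorem stmt_17_general {k : ℕ} (a : Fin k → ℕ) (ha : Monotone a) :
    ((∏ j, X (a j) : Pol) = ∑ᶠ b ∈ {b : Fin k → ℕ | memE a b}, eps a b • slide b) ∧
    ∃ c : (Σ n : ℕ, {e : Fin n → ℕ // Monotone e}) → ℤ,
      (∀ e, c e = -1 ∨ c e = 0 ∨ c e = 1) ∧
      {e | c e ≠ 0}.Finite ∧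
      (∏ j, X (a j) : Pol) = ∑ᶠ e, c e • slide e.2.1 := by
  have hfin : {b | memE a b}.Finite := (Set.finite_Iic a).subset fun b hb => memE_le ha hb
  obtain ⟨c, hc, hcfin, hsum⟩ := exists_finsum_sigma_eq_sum_smul_slide hfin.toFinset
    (fun b hb => memE_monotone ha (hfin.mem_toFinset.1 hb)) (eps a)
  refine ⟨prod_X_eq_finsum_eps_smul_slide ha, c, fun e => ?_, hcfin, ?_⟩
  · obtain h | ⟨b, -, h⟩ := hc e
    · exact Or.inr (Or.inl h)
    · rcases neg_one_pow_eq_or ℤ (epsExp a b) with h' | h' <;> simp [h, eps, h']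
  · rw [prod_X_eq_finsum_eps_smul_slide ha, finsum_mem_eq_finite_toFinset_sum _ hfin, hsum]

/-- the signed multiplicity-free slide expansion of a monomial:
`x_{a₁}⋯x_{a_k} = Σ_{b ∈ E(a)} ε(b)·𝔉_b`; in particular all coefficients of the slide
expansion of a monomial lie in `{−1,0,1}`. -/
theorem stmt_17 {k : ℕ} (hk : 0 < k) (a : Fin k → ℕ) (ha : Monotone a) :
    ((∏ j, X (a j) : Pol) = ∑ᶠ b ∈ {b : Fin k → ℕ | memE a b}, eps a b • slide b) ∧
    ∃ c : (Σ n : ℕ, {e : Fin n → ℕ // Monotone e}) → ℤ,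
      (∀ e, c e = -1 ∨ c e = 0 ∨ c e = 1) ∧
      {e | c e ≠ 0}.Finite ∧
      (∏ j, X (a j) : Pol) = ∑ᶠ e, c e • slide e.2.1 :=
  stmt_17_general a ha
end
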